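/- Let the prior be θ ~ N(μ, σ²) and the likelihood be P(D|θ) = Φ((θ − m)/c₀) for constants m ∈ ℝ, c₀ > 0. Then the posterior mean is E[θ|D] = μ + (σ²/c)·𝒱((μ − m)/c), where c = √(c₀² + σ²) and 𝒱(x) = φ(x)/Φ(x). -/

import Mathlib

/-!
Substituting `θ = μ + σ x` turns both integrals into integrals against `φ x * Φ (a + b x)` with
`a = (μ - m) / c₀`, `b = σ / c₀` and `√(1 + b²) = c / c₀`. The normalizer
`∫ φ x * Φ (a + b x)` equals `Φ (a / √(1 + b²))`: as functions of `a` both sides have the same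
derivative, because completing the square gives `∫ φ x * φ (a + b x) = φ (a / √(1 + b²)) / √(1 + b²)`,
and both equal `1 / 2` at `a = 0` by symmetry. Stein's identity `∫ x φ x g x = ∫ φ x g' x`
(integration by parts against `φ' = -x φ`) makes the first moment `b` times that same integral.
-/

open MeasureTheory

/-- Standard normal density. -/
noncomputable def stdNormalPDF (x : ℝ) : ℝ :=
  (Real.sqrt (2 * Real.pi))⁻¹ * Real.exp (-x ^ 2 / 2)

/-- Standard normal CDF. -/
noncomputable def stdNormalCDF (x : ℝ) : ℝ := ∫ u in Set.Iic x, stdNormalPDF u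

/-- Inverse Mills ratio `𝒱(x) = φ(x)/Φ(x)`. -/
noncomputable def millsV (x : ℝ) : ℝ := stdNormalPDF x / stdNormalCDF x

open Real Set Filter ProbabilityTheory

lemma stdNormalPDF_eq_gaussianPDFReal : stdNormalPDF = gaussianPDFReal 0 1 := by
  ext x
  simp [stdNormalPDF, gaussianPDFReal]

lemma stdNormalPDF_pos (x : ℝ) : 0 < stdNormalPDF x := by
  unfold stdNormalPDF; positivity

lemma stdNormalPDF_le (x : ℝ) : stdNormalPDF x ≤ (√(2 * π))⁻¹ :=
  mul_le_of_le_one_right (by positivity) (exp_le_one_iff.2 (by nlinarith [sq_nonneg x]))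

lemma stdNormalPDF_neg (x : ℝ) : stdNormalPDF (-x) = stdNormalPDF x := by
  simp [stdNormalPDF]

lemma continuous_stdNormalPDF : Continuous stdNormalPDF := by
  unfold stdNormalPDF; fun_prop

lemma hasDerivAt_stdNormalPDF (x : ℝ) : HasDerivAt stdNormalPDF (-x * stdNormalPDF x) x := by
  have h : HasDerivAt (fun y : ℝ => -y ^ 2 / 2) (-(2 * x) / 2) x := by
    simpa using ((hasDerivAt_pow 2 x).neg).div_const 2
  exact (h.exp.const_mul _).congr_deriv (by simp only [stdNormalPDF]; ring)

lemma integrable_stdNormalPDF : Integrable stdNormalPDF :=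
  stdNormalPDF_eq_gaussianPDFReal ▸ integrable_gaussianPDFReal 0 1

lemma integral_stdNormalPDF : ∫ x, stdNormalPDF x = 1 :=
  stdNormalPDF_eq_gaussianPDFReal ▸ integral_gaussianPDFReal_eq_one 0 one_ne_zero

lemma integrable_mul_stdNormalPDF : Integrable fun x => x * stdNormalPDF x := by
  have h := (integrable_mul_exp_neg_mul_sq (by norm_num : (0 : ℝ) < 1 / 2)).const_mul (√(2 * π))⁻¹
  convert h using 2 with x
  simp only [stdNormalPDF]; ring_nf

lemma stdNormalCDF_nonneg (x : ℝ) : 0 ≤ stdNormalCDF x :=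
  setIntegral_nonneg measurableSet_Iic fun u _ => (stdNormalPDF_pos u).le

lemma stdNormalCDF_le_one (x : ℝ) : stdNormalCDF x ≤ 1 :=
  integral_stdNormalPDF ▸ setIntegral_le_integral integrable_stdNormalPDF
    (ae_of_all _ fun u => (stdNormalPDF_pos u).le)

lemma stdNormalCDF_pos (x : ℝ) : 0 < stdNormalCDF x := by
  rw [stdNormalCDF, setIntegral_pos_iff_support_of_nonneg_ae
    (ae_of_all _ fun u => (stdNormalPDF_pos u).le) integrable_stdNormalPDF.integrableOn,
    Function.support_eq_univ fun u => (stdNormalPDF_pos u).ne', univ_inter]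
  simp [volume_Iic]

lemma hasDerivAt_stdNormalCDF (x : ℝ) : HasDerivAt stdNormalCDF (stdNormalPDF x) x := by
  have hΦ : stdNormalCDF = fun y => stdNormalCDF 0 + ∫ u in (0 : ℝ)..y, stdNormalPDF u := by
    ext y
    rw [← intervalIntegral.integral_Iic_sub_Iic integrable_stdNormalPDF.integrableOn
      integrable_stdNormalPDF.integrableOn, stdNormalCDF, stdNormalCDF]
    ring
  rw [hΦ]
  exact (intervalIntegral.integral_hasDerivAt_right integrable_stdNormalPDF.intervalIntegrable
    (continuous_stdNormalPDF.stronglyMeasurableAtFilter _ _)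
    continuous_stdNormalPDF.continuousAt).const_add _

lemma continuous_stdNormalCDF : Continuous stdNormalCDF :=
  continuous_iff_continuousAt.2 fun x => (hasDerivAt_stdNormalCDF x).continuousAt

lemma stdNormalCDF_neg (x : ℝ) : stdNormalCDF (-x) = 1 - stdNormalCDF x := by
  have h := intervalIntegral.integral_Iic_add_Ioi (b := x) integrable_stdNormalPDF.integrableOn
    integrable_stdNormalPDF.integrableOn
  rw [integral_stdNormalPDF, ← neg_neg x, ← integral_comp_neg_Iic] at h
  simp only [stdNormalPDF_neg, neg_neg] at h
  rw [stdNormalCDF, stdNormalCDF]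
  linarith

lemma stdNormalCDF_zero : stdNormalCDF 0 = 1 / 2 := by
  linarith [neg_zero (G := ℝ) ▸ stdNormalCDF_neg 0]

lemma integrable_stdNormalPDF_mul_stdNormalCDF_comp {u : ℝ → ℝ} (hu : Measurable u) :
    Integrable fun x => stdNormalPDF x * stdNormalCDF (u x) :=
  integrable_stdNormalPDF.mul_bdd (continuous_stdNormalCDF.measurable.comp hu).aestronglyMeasurable
    (ae_of_all _ fun x => by
      simpa [abs_of_nonneg (stdNormalCDF_nonneg _)] using stdNormalCDF_le_one (u x))

lemma integrable_mul_stdNormalPDF_mul_stdNormalCDF_comp {u : ℝ → ℝ} (hu : Measurable u) :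
    Integrable fun x => x * stdNormalPDF x * stdNormalCDF (u x) :=
  integrable_mul_stdNormalPDF.mul_bdd
    (continuous_stdNormalCDF.measurable.comp hu).aestronglyMeasurable
    (ae_of_all _ fun x => by
      simpa [abs_of_nonneg (stdNormalCDF_nonneg _)] using stdNormalCDF_le_one (u x))

lemma integrable_stdNormalPDF_mul_stdNormalPDF_comp {u : ℝ → ℝ} (hu : Measurable u) :
    Integrable fun x => stdNormalPDF x * stdNormalPDF (u x) :=
  integrable_stdNormalPDF.mul_bdd (continuous_stdNormalPDF.measurable.comp hu).aestronglyMeasurable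
    (ae_of_all _ fun x => by
      simpa [abs_of_pos (stdNormalPDF_pos _)] using stdNormalPDF_le (u x))

lemma stdNormalPDF_mul_stdNormalPDF_add_mul (a b x : ℝ) :
    stdNormalPDF x * stdNormalPDF (a + b * x) =
      stdNormalPDF (a / √(1 + b ^ 2)) *
        stdNormalPDF (√(1 + b ^ 2) * x + a * b / √(1 + b ^ 2)) := by
  have hs : √(1 + b ^ 2) ≠ 0 := by positivity
  have hs2 : √(1 + b ^ 2) ^ 2 = 1 + b ^ 2 := sq_sqrt (by positivity)
  have hexp : -x ^ 2 / 2 + -(a + b * x) ^ 2 / 2 =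
      -(a / √(1 + b ^ 2)) ^ 2 / 2 + -(√(1 + b ^ 2) * x + a * b / √(1 + b ^ 2)) ^ 2 / 2 := by
    field_simp
    linear_combination (x ^ 2 * √(1 + b ^ 2) ^ 2 - a ^ 2) * hs2
  simp only [stdNormalPDF]
  rw [mul_mul_mul_comm, ← exp_add, hexp, exp_add, mul_mul_mul_comm]

lemma integral_stdNormalPDF_mul_add {s : ℝ} (hs : 0 < s) (e : ℝ) :
    ∫ x, stdNormalPDF (s * x + e) = s⁻¹ := by
  have h := Measure.integral_comp_mul_left (fun y => stdNormalPDF (y + e)) s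
  rw [integral_add_right_eq_self, integral_stdNormalPDF] at h
  simpa [abs_of_pos hs] using h

lemma integral_stdNormalPDF_mul_stdNormalPDF_add_mul (a b : ℝ) :
    ∫ x, stdNormalPDF x * stdNormalPDF (a + b * x) =
      stdNormalPDF (a / √(1 + b ^ 2)) / √(1 + b ^ 2) := by
  simp_rw [stdNormalPDF_mul_stdNormalPDF_add_mul a b]
  rw [integral_const_mul, integral_stdNormalPDF_mul_add (by positivity)]
  exact (div_eq_mul_inv _ _).symm

lemma integral_mul_stdNormalPDF_mul_eq_of_hasDerivAt {g g' : ℝ → ℝ}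
    (hg : ∀ x, HasDerivAt g (g' x) x) (hφg : Integrable fun x => stdNormalPDF x * g x)
    (hφg' : Integrable fun x => stdNormalPDF x * g' x)
    (hxφg : Integrable fun x => x * stdNormalPDF x * g x) :
    ∫ x, x * stdNormalPDF x * g x = ∫ x, stdNormalPDF x * g' x := by
  have h := integral_mul_deriv_eq_deriv_mul_of_integrable (u := g) (v := stdNormalPDF)
    (v' := fun x => -x * stdNormalPDF x) (fun x _ => hg x) (fun x _ => hasDerivAt_stdNormalPDF x)
    (by convert hxφg.neg using 1; ext; simp only [Pi.mul_apply, Pi.neg_apply]; ring)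
    (by convert hφg' using 1; ext; simp only [Pi.mul_apply]; ring)
    (by convert hφg using 1; ext; simp only [Pi.mul_apply]; ring)
  simp only [neg_mul, mul_neg, integral_neg, neg_inj] at h
  simpa only [mul_comm, mul_left_comm] using h

lemma integral_stdNormalPDF_mul_stdNormalCDF_const_mul (b : ℝ) :
    ∫ x, stdNormalPDF x * stdNormalCDF (b * x) = 1 / 2 := by
  have h := integral_neg_eq_self (fun x => stdNormalPDF x * stdNormalCDF (b * x)) volume
  simp only [stdNormalPDF_neg, mul_neg, stdNormalCDF_neg, mul_sub, mul_one] at h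
  rw [integral_sub integrable_stdNormalPDF
    (integrable_stdNormalPDF_mul_stdNormalCDF_comp (by fun_prop)), integral_stdNormalPDF] at h
  linarith

lemma hasDerivAt_integral_stdNormalPDF_mul_stdNormalCDF_add_mul (a b : ℝ) :
    HasDerivAt (fun t => ∫ x, stdNormalPDF x * stdNormalCDF (t + b * x))
      (∫ x, stdNormalPDF x * stdNormalPDF (a + b * x)) a :=
  (hasDerivAt_integral_of_dominated_loc_of_deriv_le
    (F := fun t x => stdNormalPDF x * stdNormalCDF (t + b * x))
    (F' := fun t x => stdNormalPDF x * stdNormalPDF (t + b * x))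
    (bound := fun x => stdNormalPDF x * (√(2 * π))⁻¹) univ_mem
    (.of_forall fun t => (integrable_stdNormalPDF_mul_stdNormalCDF_comp
      (u := fun x => t + b * x) (by fun_prop)).1)
    (integrable_stdNormalPDF_mul_stdNormalCDF_comp (by fun_prop))
    (integrable_stdNormalPDF_mul_stdNormalPDF_comp (by fun_prop)).1
    (ae_of_all _ fun x t _ => by
      rw [norm_mul, norm_of_nonneg (stdNormalPDF_pos x).le,
        norm_of_nonneg (stdNormalPDF_pos _).le]
      exact mul_le_mul_of_nonneg_left (stdNormalPDF_le _) (stdNormalPDF_pos x).le)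
    (integrable_stdNormalPDF.mul_const _)
    (ae_of_all _ fun x t _ =>
      ((hasDerivAt_stdNormalCDF _).comp t ((hasDerivAt_id t).add_const _)).const_mul _ |>.congr_deriv
        (by simp))).2

theorem integral_stdNormalPDF_mul_stdNormalCDF_add_mul (a b : ℝ) :
    ∫ x, stdNormalPDF x * stdNormalCDF (a + b * x) = stdNormalCDF (a / √(1 + b ^ 2)) := by
  have hderiv (t : ℝ) : HasDerivAt
      (fun t => (∫ x, stdNormalPDF x * stdNormalCDF (t + b * x)) - stdNormalCDF (t / √(1 + b ^ 2)))
      0 t := by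
    refine ((hasDerivAt_integral_stdNormalPDF_mul_stdNormalCDF_add_mul t b).sub
      ((hasDerivAt_stdNormalCDF _).comp t ((hasDerivAt_id t).div_const _))).congr_deriv ?_
    rw [integral_stdNormalPDF_mul_stdNormalPDF_add_mul]
    simp [div_eq_mul_inv]
  have h := is_const_of_deriv_eq_zero (fun t => (hderiv t).differentiableAt)
    (fun t => (hderiv t).deriv) a 0
  simp only [zero_add, zero_div, integral_stdNormalPDF_mul_stdNormalCDF_const_mul,
    stdNormalCDF_zero] at h
  linarith

theorem integral_mul_stdNormalPDF_mul_stdNormalCDF_add_mul (a b : ℝ) :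
    ∫ x, x * stdNormalPDF x * stdNormalCDF (a + b * x) =
      b * stdNormalPDF (a / √(1 + b ^ 2)) / √(1 + b ^ 2) := by
  rw [integral_mul_stdNormalPDF_mul_eq_of_hasDerivAt (g := fun x => stdNormalCDF (a + b * x))
    (g' := fun x => b * stdNormalPDF (a + b * x))
    (fun x => ((hasDerivAt_stdNormalCDF _).comp x (((hasDerivAt_id x).const_mul b).const_add a))
      |>.congr_deriv (by simp [mul_comm]))
    (integrable_stdNormalPDF_mul_stdNormalCDF_comp (by fun_prop))
    ((integrable_stdNormalPDF_mul_stdNormalPDF_comp (u := fun x => a + b * x)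
      (by fun_prop)).const_mul b |>.congr
      (ae_of_all _ fun x => by ring))
    (integrable_mul_stdNormalPDF_mul_stdNormalCDF_comp (by fun_prop))]
  simp_rw [mul_left_comm _ b]
  rw [integral_const_mul, integral_stdNormalPDF_mul_stdNormalPDF_add_mul, mul_div_assoc]

lemma integral_comp_sub_div {E : Type*} [NormedAddCommGroup E] [NormedSpace ℝ E] (G : ℝ → E)
    (μ σ : ℝ) : ∫ θ, G ((θ - μ) / σ) = |σ| • ∫ x, G x := by
  rw [← Measure.integral_comp_div G σ]
  exact integral_sub_right_eq_self (fun u => G (u / σ)) μ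

section Posterior

variable {μ σ m c₀ : ℝ}

lemma sqrt_one_add_div_sq (hc₀ : 0 < c₀) (σ : ℝ) :
    √(1 + (σ / c₀) ^ 2) = √(c₀ ^ 2 + σ ^ 2) / c₀ := by
  rw [show 1 + (σ / c₀) ^ 2 = (c₀ ^ 2 + σ ^ 2) / c₀ ^ 2 by field_simp,
    sqrt_div' _ (sq_nonneg c₀), sqrt_sq hc₀.le]

lemma sub_div_eq_add_mul_sub_div (hσ : σ ≠ 0) (hc₀ : c₀ ≠ 0) (θ : ℝ) :
    (θ - m) / c₀ = (μ - m) / c₀ + σ / c₀ * ((θ - μ) / σ) := by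
  field_simp
  ring

theorem integral_stdNormalPDF_sub_div_mul_stdNormalCDF_sub_div (hσ : 0 < σ) (hc₀ : 0 < c₀) :
    ∫ θ, stdNormalPDF ((θ - μ) / σ) * stdNormalCDF ((θ - m) / c₀) =
      σ * stdNormalCDF ((μ - m) / √(c₀ ^ 2 + σ ^ 2)) := by
  calc ∫ θ, stdNormalPDF ((θ - μ) / σ) * stdNormalCDF ((θ - m) / c₀)
      = |σ| • ∫ x, stdNormalPDF x * stdNormalCDF ((μ - m) / c₀ + σ / c₀ * x) := by
        rw [← integral_comp_sub_div _ μ]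
        congr 1; ext θ; rw [sub_div_eq_add_mul_sub_div hσ.ne' hc₀.ne']
    _ = σ * stdNormalCDF ((μ - m) / √(c₀ ^ 2 + σ ^ 2)) := by
        rw [integral_stdNormalPDF_mul_stdNormalCDF_add_mul, sqrt_one_add_div_sq hc₀,
          div_div_div_cancel_right₀ hc₀.ne', abs_of_pos hσ, smul_eq_mul]

theorem integral_mul_stdNormalPDF_sub_div_mul_stdNormalCDF_sub_div (hσ : 0 < σ) (hc₀ : 0 < c₀) :
    ∫ θ, θ * (stdNormalPDF ((θ - μ) / σ) * stdNormalCDF ((θ - m) / c₀)) =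
      σ * (σ ^ 2 / √(c₀ ^ 2 + σ ^ 2) * stdNormalPDF ((μ - m) / √(c₀ ^ 2 + σ ^ 2)) +
        μ * stdNormalCDF ((μ - m) / √(c₀ ^ 2 + σ ^ 2))) := by
  calc ∫ θ, θ * (stdNormalPDF ((θ - μ) / σ) * stdNormalCDF ((θ - m) / c₀))
      = |σ| • ∫ x, (σ * (x * stdNormalPDF x * stdNormalCDF ((μ - m) / c₀ + σ / c₀ * x)) +
          μ * (stdNormalPDF x * stdNormalCDF ((μ - m) / c₀ + σ / c₀ * x))) := by
        rw [← integral_comp_sub_div _ μ]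
        congr 1; ext θ
        rw [sub_div_eq_add_mul_sub_div hσ.ne' hc₀.ne']
        have hθ : θ = σ * ((θ - μ) / σ) + μ := by field_simp; ring
        generalize (θ - μ) / σ = x at hθ ⊢
        rw [hθ]; ring
    _ = _ := by
        rw [integral_add
          ((integrable_mul_stdNormalPDF_mul_stdNormalCDF_comp (by fun_prop)).const_mul σ)
          ((integrable_stdNormalPDF_mul_stdNormalCDF_comp (by fun_prop)).const_mul μ),
          integral_const_mul, integral_const_mul, integral_stdNormalPDF_mul_stdNormalCDF_add_mul,
          integral_mul_stdNormalPDF_mul_stdNormalCDF_add_mul, sqrt_one_add_div_sq hc₀,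
          div_div_div_cancel_right₀ hc₀.ne', abs_of_pos hσ, smul_eq_mul]
        field_simp

end Posterior

/-- TrueSkill-style posterior mean: with prior `N(μ, σ²)` and likelihood
`Φ((θ−m)/c₀)`, the posterior mean is `μ + (σ²/c)·𝒱((μ−m)/c)` with
`c = √(c₀² + σ²)`. -/
theorem truncated_probit_posterior_mean
    (μ σ m c₀ c : ℝ) (hσ : 0 < σ) (hc₀ : 0 < c₀)
    (hc : c = Real.sqrt (c₀ ^ 2 + σ ^ 2)) :
    (∫ θ : ℝ, θ * (stdNormalPDF ((θ - μ) / σ) * stdNormalCDF ((θ - m) / c₀))) /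
        (∫ θ : ℝ, stdNormalPDF ((θ - μ) / σ) * stdNormalCDF ((θ - m) / c₀)) =
      μ + σ ^ 2 / c * millsV ((μ - m) / c) := by
  subst hc
  rw [integral_mul_stdNormalPDF_sub_div_mul_stdNormalCDF_sub_div hσ hc₀,
    integral_stdNormalPDF_sub_div_mul_stdNormalCDF_sub_div hσ hc₀, millsV]
  have hΦ := stdNormalCDF_pos ((μ - m) / √(c₀ ^ 2 + σ ^ 2))
  field_simp
  ring
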